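/- If y ∉ M(X,Z), then the function (β,κ₀,κ) ↦ l̃(β,κ₀,κ,y) = n log κ₀ + log det Ṽ(κ) + κ₀⁻¹(y−Xβ)'Ṽ(κ)⁻¹(y−Xβ) attains its infimum on ℝᵐ × (0,∞) × [0,∞)^r; i.e., the maximum likelihood estimate exists. -/

import Mathlib

open Matrix Filter

noncomputable def Vtilde {n r : ℕ} {k : Fin r → ℕ}
    (Z : ∀ i : Fin r, Matrix (Fin n) (Fin (k i)) ℝ) (κ : Fin r → ℝ) :
    Matrix (Fin n) (Fin n) ℝ :=
  1 + ∑ i, κ i • (Z i * (Z i)ᵀ)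

noncomputable def colSpaceXZ {n m r : ℕ} {k : Fin r → ℕ}
    (X : Matrix (Fin n) (Fin m) ℝ) (Z : ∀ i : Fin r, Matrix (Fin n) (Fin (k i)) ℝ) :
    Submodule ℝ (Fin n → ℝ) :=
  LinearMap.range X.mulVecLin ⊔ ⨆ i, LinearMap.range (Z i).mulVecLin

noncomputable def sXZ {n m r : ℕ} {k : Fin r → ℕ}
    (X : Matrix (Fin n) (Fin m) ℝ) (Z : ∀ i : Fin r, Matrix (Fin n) (Fin (k i)) ℝ)
    (y : Fin n → ℝ) : ℝ :=
  let L : EuclideanSpace ℝ (Fin n) ≃ₗ[ℝ] (Fin n → ℝ) :=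
    WithLp.linearEquiv 2 ℝ (Fin n → ℝ)
  let S : Submodule ℝ (EuclideanSpace ℝ (Fin n)) :=
    (colSpaceXZ X Z).map L.symm.toLinearMap
  ‖(Submodule.orthogonalProjectionOnto Sᗮ (L.symm y) : EuclideanSpace ℝ (Fin n))‖ ^ 2

noncomputable def ltilde {n m r : ℕ} {k : Fin r → ℕ}
    (X : Matrix (Fin n) (Fin m) ℝ) (Z : ∀ i : Fin r, Matrix (Fin n) (Fin (k i)) ℝ)
    (y : Fin n → ℝ) (β : Fin m → ℝ) (κ₀ : ℝ) (κ : Fin r → ℝ) : ℝ :=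
  n * Real.log κ₀ + Real.log (Vtilde Z κ).det
    + κ₀⁻¹ * ((y - X.mulVec β) ⬝ᵥ (Vtilde Z κ)⁻¹.mulVec (y - X.mulVec β))

/-!
Write `μ = Xβ`. Let `w` be the component of `y` orthogonal to `M(X,Z)`; it is nonzero, and
`Zᵢ'w = 0` gives `Ṽ(κ)w = w`, hence `(y - μ)'Ṽ(κ)⁻¹(y - μ) ≥ ‖w‖² > 0` uniformly in `μ ∈ M(X,Z)`
and `κ ≥ 0`. Together with `log det Ṽ(κ) ≥ 0` this makes `l̃` coercive: on a sublevel set `κ₀`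
stays away from `0` and `∞`, `det Ṽ(κ) ≥ 1 + Σ κᵢ tr(ZᵢZᵢ')` bounds the `κᵢ` with `Zᵢ ≠ 0`, and
`‖y - μ‖² ≤ (1 + Σ κᵢ tr(ZᵢZᵢ')) (y - μ)'Ṽ(κ)⁻¹(y - μ)` bounds `μ`. The `κᵢ` with `Zᵢ = 0` do not
enter `l̃` and may be set to `0`, so a sublevel set is dominated by a compact box on which `l̃` is
continuous.
-/

theorem exists_bounds_of_mul_log_add_add_div_le {c s L : ℝ} (hc : 0 < c) (hs : 0 < s) :
    ∃ ε C B : ℝ, 0 < ε ∧ ∀ a D Q : ℝ, 0 < a → 0 ≤ D → s ≤ Q →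
      c * Real.log a + D + Q / a ≤ L → ε ≤ a ∧ a ≤ C ∧ D ≤ B ∧ Q ≤ C * B := by
  set t := s / (2 * c)
  set B₁ := max (L - c * (Real.log t + 1)) 1
  have hB₁ : 0 < B₁ := lt_of_lt_of_le one_pos (le_max_right _ _)
  set ε := s / (2 * B₁)
  refine ⟨ε, Real.exp (L / c), L - c * Real.log ε, by positivity,
    fun a D Q ha hD hQ h => ?_⟩
  have hsQ : s / a ≤ Q / a := div_le_div_of_nonneg_right hQ ha.le
  have hQa₀ : 0 ≤ Q / a := div_nonneg (hs.le.trans hQ) ha.le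
  -- `log a ≥ log t + 1 - t / a`, and `c * t / a` is half of `s / a`
  have hlog : c * (Real.log t + 1) - s / (2 * a) ≤ c * Real.log a := by
    have h := Real.log_le_sub_one_of_pos (div_pos (by positivity : 0 < t) ha)
    rw [Real.log_div (by positivity) ha.ne'] at h
    have : c * (t / a) = s / (2 * a) := by simp only [t]; field_simp
    nlinarith
  have hεa : ε ≤ a := by
    have : s / (2 * a) ≤ B₁ := by
      have : s / a = 2 * (s / (2 * a)) := by field_simp
      linarith [le_max_left (L - c * (Real.log t + 1)) 1]
    rw [div_le_iff₀ (by positivity)] at this ⊢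
    linarith
  have haC : a ≤ Real.exp (L / c) := by
    rw [← Real.exp_log ha, Real.exp_le_exp, le_div_iff₀ hc]
    nlinarith
  have hεa' : c * Real.log ε ≤ c * Real.log a :=
    mul_le_mul_of_nonneg_left (Real.log_le_log (by positivity) hεa) hc.le
  have hQa : Q / a ≤ L - c * Real.log ε := by linarith
  refine ⟨hεa, haC, by linarith, ?_⟩
  calc Q = a * (Q / a) := by field_simp
    _ ≤ Real.exp (L / c) * (L - c * Real.log ε) :=
      mul_le_mul haC hQa hQa₀ (Real.exp_pos _).le

theorem dotProduct_self_nonneg {ι R : Type*} [Fintype ι] [CommRing R] [LinearOrder R]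
    [IsStrictOrderedRing R] (v : ι → R) : 0 ≤ v ⬝ᵥ v :=
  Fintype.sum_nonneg fun i => mul_self_nonneg (v i)

theorem sq_le_dotProduct_self {ι : Type*} [Fintype ι] (v : ι → ℝ) (i : ι) :
    v i ^ 2 ≤ v ⬝ᵥ v := by
  simpa [sq, dotProduct] using
    Finset.single_le_sum (fun j _ => mul_self_nonneg (v j)) (Finset.mem_univ i)

theorem Finset.one_add_sum_le_prod_one_add {κ : Type*} (s : Finset κ) {f : κ → ℝ}
    (hf : ∀ i ∈ s, 0 ≤ f i) : 1 + ∑ i ∈ s, f i ≤ ∏ i ∈ s, (1 + f i) := by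
  induction s using Finset.cons_induction with
  | empty => simp
  | cons a s _ ih =>
    rw [Finset.sum_cons, Finset.prod_cons]
    have hfa := hf a (Finset.mem_cons_self a s)
    have hs := ih fun i hi => hf i (Finset.mem_cons_of_mem hi)
    nlinarith [Finset.sum_nonneg fun i hi => hf i (Finset.mem_cons_of_mem hi)]

section

variable {ι : Type*} [Fintype ι] [DecidableEq ι]

theorem Matrix.PosSemidef.one_add_trace_le_det_one_add {A : Matrix ι ι ℝ} (hA : A.PosSemidef) :
    1 + A.trace ≤ (1 + A).det := by
  set U := hA.1.eigenvectorUnitary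
  have hdet : (1 + A).det = ∏ i, (1 + hA.1.eigenvalues i) := by
    conv_lhs => rw [hA.1.spectral_theorem, ← map_one (Unitary.conjStarAlgAut ℝ _ U), ← map_add]
    rw [Unitary.conjStarAlgAut_apply, det_mul_comm, ← mul_assoc, Unitary.coe_star_mul_self,
      one_mul, ← diagonal_one, diagonal_add, det_diagonal]
    rfl
  rw [hdet, hA.1.trace_eq_sum_eigenvalues]
  exact Finset.one_add_sum_le_prod_one_add _ fun i _ => hA.eigenvalues_nonneg i

theorem Matrix.PosSemidef.dotProduct_mulVec_le_trace_mul {A : Matrix ι ι ℝ} (hA : A.PosSemidef)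
    (x : ι → ℝ) : x ⬝ᵥ A *ᵥ x ≤ A.trace * (x ⬝ᵥ x) := by
  have hspec := hA.1.spectral_theorem
  have hU := hA.1.eigenvectorUnitary.2
  rw [Unitary.conjStarAlgAut_apply] at hspec
  set U : Matrix ι ι ℝ := (hA.1.eigenvectorUnitary : Matrix ι ι ℝ)
  set ev := hA.1.eigenvalues
  have hquad : x ⬝ᵥ A *ᵥ x = ∑ i, ev i * (Uᵀ *ᵥ x) i ^ 2 := by
    rw [hspec, ← mulVec_mulVec, ← mulVec_mulVec, dotProduct_mulVec, star_eq_conjTranspose,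
      conjTranspose_eq_transpose_of_trivial, ← mulVec_transpose]
    simp only [dotProduct, mulVec_diagonal, Function.comp_apply, RCLike.ofReal_real_eq_id, id]
    exact Finset.sum_congr rfl fun i _ => by ring
  have hnorm : (Uᵀ *ᵥ x) ⬝ᵥ (Uᵀ *ᵥ x) = x ⬝ᵥ x := by
    have hUU : U * Uᵀ = 1 := by
      simpa [star_eq_conjTranspose] using Unitary.mul_star_self_of_mem hU
    rw [dotProduct_mulVec, mulVec_transpose, vecMul_vecMul, hUU, vecMul_one]
  rw [hquad, hA.1.trace_eq_sum_eigenvalues, ← hnorm, Finset.sum_mul]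
  exact Finset.sum_le_sum fun i _ =>
    mul_le_mul_of_nonneg_left (sq_le_dotProduct_self _ i) (hA.eigenvalues_nonneg i)

theorem Matrix.PosDef.sq_dotProduct_self_le {V : Matrix ι ι ℝ} (hV : V.PosDef) (x : ι → ℝ) :
    (x ⬝ᵥ x) ^ 2 ≤ (x ⬝ᵥ V⁻¹ *ᵥ x) * (x ⬝ᵥ V *ᵥ x) := by
  have hVV : V⁻¹ * V = 1 := nonsing_inv_mul V (hV.isUnit.map detMonoidHom)
  have hVT : V⁻¹ᵀ = V⁻¹ := by
    rw [transpose_nonsing_inv, ← conjTranspose_eq_transpose_of_trivial, hV.isHermitian.eq]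
  have hCS := LinearMap.BilinForm.apply_mul_apply_le_of_forall_zero_le (toLinearMap₂' ℝ V⁻¹)
    (fun z => by simpa [toLinearMap₂'_apply'] using hV.inv.posSemidef.dotProduct_mulVec_nonneg z)
    x (V *ᵥ x)
  simp only [toLinearMap₂'_apply', mulVec_mulVec, hVV, one_mulVec] at hCS
  rwa [dotProduct_mulVec (V *ᵥ x), ← mulVec_transpose, hVT, mulVec_mulVec, hVV, one_mulVec,
    ← sq, dotProduct_comm (V *ᵥ x)] at hCS

theorem Matrix.PosDef.dotProduct_le_dotProduct_inv_mulVec {V : Matrix ι ι ℝ} (hV : V.PosDef)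
    {v w : ι → ℝ} (hw : V *ᵥ w = w) (horth : (v - w) ⬝ᵥ w = 0) :
    w ⬝ᵥ w ≤ v ⬝ᵥ V⁻¹ *ᵥ v := by
  have hVw : V⁻¹ *ᵥ w = w := by
    conv_lhs => rw [← hw]
    rw [mulVec_mulVec, nonsing_inv_mul V (hV.isUnit.map detMonoidHom), one_mulVec]
  have hVT : V⁻¹ᵀ = V⁻¹ := by
    rw [transpose_nonsing_inv, ← conjTranspose_eq_transpose_of_trivial, hV.isHermitian.eq]
  set p := v - w
  have hp : 0 ≤ p ⬝ᵥ V⁻¹ *ᵥ p := hV.inv.posSemidef.dotProduct_mulVec_nonneg p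
  have hexp : v ⬝ᵥ V⁻¹ *ᵥ v = p ⬝ᵥ V⁻¹ *ᵥ p + 2 * (p ⬝ᵥ w) + w ⬝ᵥ w := by
    rw [show v = p + w by simp [p], mulVec_add, hVw, dotProduct_add, add_dotProduct,
      add_dotProduct, dotProduct_mulVec w, ← mulVec_transpose, hVT, hVw, dotProduct_comm w p]
    ring
  rw [hexp, horth]
  linarith

theorem Matrix.PosSemidef.dotProduct_self_le_one_add_trace_mul_inv {A : Matrix ι ι ℝ}
    (hA : A.PosSemidef) (x : ι → ℝ) : x ⬝ᵥ x ≤ (1 + A.trace) * (x ⬝ᵥ (1 + A)⁻¹ *ᵥ x) := by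
  have hV : (1 + A).PosDef := PosDef.one.add_posSemidef hA
  have hCS := hV.sq_dotProduct_self_le x
  have hq : 0 ≤ x ⬝ᵥ (1 + A)⁻¹ *ᵥ x := hV.inv.posSemidef.dotProduct_mulVec_nonneg x
  have hVx : x ⬝ᵥ (1 + A) *ᵥ x ≤ (1 + A.trace) * (x ⬝ᵥ x) := by
    rw [add_mulVec, one_mulVec, dotProduct_add]
    linarith [hA.dotProduct_mulVec_le_trace_mul x]
  rcases (dotProduct_self_nonneg x).eq_or_lt with h0 | hpos
  · rw [← h0]
    exact mul_nonneg (by linarith [hA.trace_nonneg]) hq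
  · refine le_of_mul_le_mul_right ?_ hpos
    nlinarith [mul_le_mul_of_nonneg_left hVx hq]

end

theorem IsCompact.exists_isMinOn_of_forall_exists_le {α β : Type*} [TopologicalSpace α]
    [LinearOrder β] [TopologicalSpace β] [ClosedIicTopology β] {f : α → β} {s K : Set α}
    (hK : IsCompact K) (hKs : K ⊆ s) (hf : ContinuousOn f K) (hs : s.Nonempty)
    (hdom : ∀ x ∈ s, ∃ x' ∈ K, f x' ≤ f x) : ∃ x ∈ s, IsMinOn f s x := by
  obtain ⟨x₀, hx₀⟩ := hs
  obtain ⟨x, hxK, hx⟩ := hK.exists_isMinOn (let ⟨x', hx', _⟩ := hdom x₀ hx₀; ⟨x', hx'⟩) hf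
  refine ⟨x, hKs hxK, fun z hz => ?_⟩
  obtain ⟨z', hz'K, hz'⟩ := hdom z hz
  exact (hx hz'K).trans hz'

theorem norm_le_sqrt_dotProduct_self {ι : Type*} [Fintype ι] (v : ι → ℝ) : ‖v‖ ≤ √(v ⬝ᵥ v) :=
  (pi_norm_le_iff_of_nonneg (Real.sqrt_nonneg _)).2 fun i => by
    rw [Real.norm_eq_abs]
    exact Real.abs_le_sqrt (sq_le_dotProduct_self v i)

theorem Submodule.exists_ne_zero_sub_mem_orthogonal {ι : Type*} [Fintype ι]
    {M : Submodule ℝ (ι → ℝ)} {y : ι → ℝ}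
    (hy : y ∉ M) : ∃ w : ι → ℝ, w ≠ 0 ∧ y - w ∈ M ∧ ∀ u ∈ M, u ⬝ᵥ w = 0 := by
  set S : Submodule ℝ (EuclideanSpace ℝ ι) :=
    M.comap (WithLp.linearEquiv 2 ℝ (ι → ℝ)).toLinearMap
  set p := S.starProjection (WithLp.toLp 2 y)
  have hp : p.ofLp ∈ M := S.starProjection_apply_mem _
  have horth := S.sub_starProjection_mem_orthogonal (WithLp.toLp 2 y)
  refine ⟨y - p.ofLp, fun h => hy ?_, by simpa using hp, fun u hu => ?_⟩
  · rwa [sub_eq_zero.mp h]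
  · have := (Submodule.mem_orthogonal S _).mp horth (WithLp.toLp 2 u) hu
    rw [EuclideanSpace.inner_eq_star_dotProduct] at this
    simpa [dotProduct_comm u] using this

section Vtilde

variable {n r : ℕ} {k : Fin r → ℕ} (Z : ∀ i : Fin r, Matrix (Fin n) (Fin (k i)) ℝ)

theorem posSemidef_sum_smul_mul_transpose {κ : Fin r → ℝ} (hκ : ∀ i, 0 ≤ κ i) :
    (∑ i, κ i • (Z i * (Z i)ᵀ)).PosSemidef :=
  posSemidef_sum _ fun i _ => (posSemidef_self_mul_conjTranspose (Z i)).smul (hκ i)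

theorem trace_sum_smul_mul_transpose (κ : Fin r → ℝ) :
    (∑ i, κ i • (Z i * (Z i)ᵀ)).trace = ∑ i, κ i * (Z i * (Z i)ᵀ).trace := by
  simp [trace_sum, trace_smul]

theorem trace_mul_transpose_nonneg (i : Fin r) : 0 ≤ (Z i * (Z i)ᵀ).trace :=
  (posSemidef_self_mul_conjTranspose (Z i)).trace_nonneg

theorem Vtilde_posDef {κ : Fin r → ℝ} (hκ : ∀ i, 0 ≤ κ i) : (Vtilde Z κ).PosDef :=
  PosDef.one.add_posSemidef (posSemidef_sum_smul_mul_transpose Z hκ)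

theorem Vtilde_mulVec_eq_self {w : Fin n → ℝ} (hw : ∀ i, (Z i)ᵀ *ᵥ w = 0) (κ : Fin r → ℝ) :
    Vtilde Z κ *ᵥ w = w := by
  simp [Vtilde, add_mulVec, sum_mulVec, smul_mulVec, ← mulVec_mulVec, hw]

theorem Vtilde_ite_eq_zero (κ : Fin r → ℝ) :
    Vtilde Z (fun i => if Z i = 0 then 0 else κ i) = Vtilde Z κ := by
  unfold Vtilde
  congr 1
  refine Finset.sum_congr rfl fun i _ => ?_
  by_cases h : Z i = 0 <;> simp [h]

theorem one_add_sum_le_det_Vtilde {κ : Fin r → ℝ} (hκ : ∀ i, 0 ≤ κ i) :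
    1 + ∑ i, κ i * (Z i * (Z i)ᵀ).trace ≤ (Vtilde Z κ).det := by
  rw [← trace_sum_smul_mul_transpose]
  exact (posSemidef_sum_smul_mul_transpose Z hκ).one_add_trace_le_det_one_add

theorem dotProduct_self_le_mul_dotProduct_Vtilde_inv {κ : Fin r → ℝ} (hκ : ∀ i, 0 ≤ κ i)
    (x : Fin n → ℝ) :
    x ⬝ᵥ x ≤ (1 + ∑ i, κ i * (Z i * (Z i)ᵀ).trace) * (x ⬝ᵥ (Vtilde Z κ)⁻¹ *ᵥ x) := by
  rw [← trace_sum_smul_mul_transpose]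
  exact (posSemidef_sum_smul_mul_transpose Z hκ).dotProduct_self_le_one_add_trace_mul_inv x

theorem continuous_Vtilde : Continuous (Vtilde Z) := by
  unfold Vtilde
  fun_prop

end Vtilde

noncomputable def ltildeMean {n r : ℕ} {k : Fin r → ℕ}
    (Z : ∀ i : Fin r, Matrix (Fin n) (Fin (k i)) ℝ) (y : Fin n → ℝ)
    (p : (Fin n → ℝ) × ℝ × (Fin r → ℝ)) : ℝ :=
  n * Real.log p.2.1 + Real.log (Vtilde Z p.2.2).det
    + p.2.1⁻¹ * ((y - p.1) ⬝ᵥ (Vtilde Z p.2.2)⁻¹ *ᵥ (y - p.1))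

def meanParamSpace {n : ℕ} (W : Submodule ℝ (Fin n → ℝ)) (r : ℕ) :
    Set ((Fin n → ℝ) × ℝ × (Fin r → ℝ)) :=
  {p | p.1 ∈ W ∧ 0 < p.2.1 ∧ ∀ i, 0 ≤ p.2.2 i}

theorem ltildeMean_zero_one_zero {n r : ℕ} {k : Fin r → ℕ}
    (Z : ∀ i : Fin r, Matrix (Fin n) (Fin (k i)) ℝ) (y : Fin n → ℝ) :
    ltildeMean Z y (0, 1, 0) = y ⬝ᵥ y := by
  simp [ltildeMean, Vtilde]

theorem continuousOn_ltildeMean {n r : ℕ} {k : Fin r → ℕ}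
    (Z : ∀ i : Fin r, Matrix (Fin n) (Fin (k i)) ℝ) (y : Fin n → ℝ) :
    ContinuousOn (ltildeMean Z y) (meanParamSpace ⊤ r) := by
  have hV : Continuous fun p : (Fin n → ℝ) × ℝ × (Fin r → ℝ) => Vtilde Z p.2.2 :=
    (continuous_Vtilde Z).comp (by fun_prop)
  have hdet : ∀ p ∈ meanParamSpace (⊤ : Submodule ℝ (Fin n → ℝ)) r, (Vtilde Z p.2.2).det ≠ 0 :=
    fun p hp => (Vtilde_posDef Z hp.2.2).det_pos.ne'
  have hinv : ContinuousOn (fun p : (Fin n → ℝ) × ℝ × (Fin r → ℝ) => (Vtilde Z p.2.2)⁻¹)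
      (meanParamSpace ⊤ r) := fun p hp =>
    ((continuousAt_matrix_inv _ (by
      rw [Ring.inverse_eq_inv']; exact continuousAt_inv₀ (hdet p hp))).comp
      hV.continuousAt).continuousWithinAt
  unfold ltildeMean
  refine ((continuousOn_const.mul (continuousOn_snd.fst.log fun p hp => hp.2.1.ne')).add
    (hV.matrix_det.continuousOn.log hdet)).add
    ((continuousOn_snd.fst.inv₀ fun p hp => hp.2.1.ne').mul ?_)
  have hquad : Continuous fun q : Matrix (Fin n) (Fin n) ℝ × (Fin n → ℝ) => q.2 ⬝ᵥ q.1 *ᵥ q.2 :=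
    continuous_snd.dotProduct (continuous_fst.matrix_mulVec continuous_snd)
  exact hquad.comp_continuousOn (hinv.prodMk (continuousOn_const.sub continuousOn_fst))

section

variable {n m r : ℕ} {k : Fin r → ℕ} {X : Matrix (Fin n) (Fin m) ℝ}
  {Z : ∀ i : Fin r, Matrix (Fin n) (Fin (k i)) ℝ}

theorem transpose_mulVec_eq_zero_of_forall_mem_colSpaceXZ {w : Fin n → ℝ}
    (hw : ∀ u ∈ colSpaceXZ X Z, u ⬝ᵥ w = 0) (i : Fin r) : (Z i)ᵀ *ᵥ w = 0 := by
  funext l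
  have hcol : Z i *ᵥ Pi.single l 1 ∈ colSpaceXZ X Z :=
    Submodule.mem_sup_right (Submodule.mem_iSup_of_mem i ⟨Pi.single l 1, rfl⟩)
  have := hw _ hcol
  rwa [dotProduct_comm, dotProduct_mulVec, ← mulVec_transpose, dotProduct_single, mul_one] at this

theorem exists_pos_le_dotProduct_Vtilde_inv {y : Fin n → ℝ} (hy : y ∉ colSpaceXZ X Z) :
    ∃ s > 0, ∀ μ ∈ colSpaceXZ X Z, ∀ κ : Fin r → ℝ, (∀ i, 0 ≤ κ i) →
      s ≤ (y - μ) ⬝ᵥ (Vtilde Z κ)⁻¹ *ᵥ (y - μ) := by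
  obtain ⟨w, hw0, hyw, horth⟩ := Submodule.exists_ne_zero_sub_mem_orthogonal hy
  refine ⟨w ⬝ᵥ w, (dotProduct_self_nonneg w).lt_of_ne' (dotProduct_self_eq_zero.not.mpr hw0),
    fun μ hμ κ hκ => (Vtilde_posDef Z hκ).dotProduct_le_dotProduct_inv_mulVec
      (Vtilde_mulVec_eq_self Z (transpose_mulVec_eq_zero_of_forall_mem_colSpaceXZ horth) κ) ?_⟩
  rw [show y - μ - w = (y - w) - μ by abel]
  exact horth _ (Submodule.sub_mem _ hyw hμ)

theorem ltildeMean_sublevel_bounds {y : Fin n → ℝ} (hy : y ∉ colSpaceXZ X Z) (L : ℝ) :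
    ∃ ε C B : ℝ, 0 < ε ∧ ∀ p ∈ meanParamSpace (colSpaceXZ X Z) r, ltildeMean Z y p ≤ L →
      ε ≤ p.2.1 ∧ p.2.1 ≤ C ∧ (y - p.1) ⬝ᵥ (y - p.1) ≤ Real.exp B * (C * B) ∧
        ∑ i, p.2.2 i * (Z i * (Z i)ᵀ).trace ≤ Real.exp B - 1 := by
  obtain ⟨s, hs, hsQ⟩ := exists_pos_le_dotProduct_Vtilde_inv hy
  have hn : (0 : ℝ) < n := by
    rcases Nat.eq_zero_or_pos n with rfl | hn
    · exact absurd (Subsingleton.elim y 0 ▸ (colSpaceXZ X Z).zero_mem) hy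
    · exact_mod_cast hn
  obtain ⟨ε, C, B, hε, hbound⟩ := exists_bounds_of_mul_log_add_add_div_le hn hs (L := L)
  refine ⟨ε, C, B, hε, fun ⟨μ, κ₀, κ⟩ ⟨hμ, hκ₀, hκ⟩ hL => ?_⟩
  have hT : 0 ≤ ∑ i, κ i * (Z i * (Z i)ᵀ).trace :=
    Finset.sum_nonneg fun i _ => mul_nonneg (hκ i) (trace_mul_transpose_nonneg Z i)
  have hdet := one_add_sum_le_det_Vtilde Z hκ
  have hQ := hsQ μ hμ κ hκ
  obtain ⟨hεκ₀, hκ₀C, hlogdet, hQB⟩ := hbound κ₀ (Real.log (Vtilde Z κ).det) _ hκ₀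
    (Real.log_nonneg (by linarith)) hQ (by rw [div_eq_inv_mul]; exact hL)
  have hdetB : (Vtilde Z κ).det ≤ Real.exp B :=
    (Real.log_le_iff_le_exp (by linarith)).mp hlogdet
  refine ⟨hεκ₀, hκ₀C, ?_, by linarith⟩
  calc (y - μ) ⬝ᵥ (y - μ)
      ≤ (1 + ∑ i, κ i * (Z i * (Z i)ᵀ).trace) * ((y - μ) ⬝ᵥ (Vtilde Z κ)⁻¹ *ᵥ (y - μ)) :=
        dotProduct_self_le_mul_dotProduct_Vtilde_inv Z hκ _
    _ ≤ Real.exp B * (C * B) := mul_le_mul (by linarith) hQB (hs.le.trans hQ) (Real.exp_pos _).le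

theorem exists_isCompact_ltildeMean_sublevel {y : Fin n → ℝ} (hy : y ∉ colSpaceXZ X Z) (L : ℝ) :
    ∃ K ⊆ meanParamSpace (LinearMap.range X.mulVecLin) r, IsCompact K ∧
      ∀ p ∈ meanParamSpace (LinearMap.range X.mulVecLin) r, (∀ i, Z i = 0 → p.2.2 i = 0) →
        ltildeMean Z y p ≤ L → p ∈ K := by
  obtain ⟨ε, C, B, hε, hbound⟩ := ltildeMean_sublevel_bounds hy L
  refine ⟨(Metric.closedBall y √(Real.exp B * (C * B)) ∩ LinearMap.range X.mulVecLin) ×ˢ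
      Set.Icc ε C ×ˢ Set.univ.pi fun i => Set.Icc 0 ((Real.exp B - 1) / (Z i * (Z i)ᵀ).trace),
    fun p ⟨⟨_, hμ⟩, ⟨hκ₀, _⟩, hκ⟩ => ⟨hμ, hε.trans_le hκ₀, fun i => (hκ i trivial).1⟩,
    ((isCompact_closedBall _ _).inter_right (Submodule.closed_of_finiteDimensional _)).prod
      (isCompact_Icc.prod (isCompact_univ_pi fun _ => isCompact_Icc)), ?_⟩
  rintro ⟨μ, κ₀, κ⟩ ⟨hμ, hκ₀, hκ⟩ hZ hL
  obtain ⟨hεκ₀, hκ₀C, hdist, hsum⟩ :=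
    hbound _ ⟨Submodule.mem_sup_left hμ, hκ₀, hκ⟩ hL
  refine ⟨⟨?_, hμ⟩, ⟨hεκ₀, hκ₀C⟩, fun i _ => ⟨hκ i, ?_⟩⟩
  · rw [Metric.mem_closedBall, dist_comm, dist_eq_norm]
    exact (norm_le_sqrt_dotProduct_self _).trans (Real.sqrt_le_sqrt hdist)
  by_cases hi : Z i = 0
  · -- the bound is `(exp B - 1) / 0 = 0`
    simpa [hi] using (hZ i hi).le
  have htr : 0 < (Z i * (Z i)ᵀ).trace := (trace_mul_transpose_nonneg Z i).lt_of_ne'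
    (trace_mul_conjTranspose_self_eq_zero_iff.not.mpr hi)
  rw [le_div_iff₀ htr]
  exact (Finset.single_le_sum (f := fun j => κ j * (Z j * (Z j)ᵀ).trace)
    (fun j _ => mul_nonneg (hκ j) (trace_mul_transpose_nonneg Z j)) (Finset.mem_univ i)).trans hsum

theorem exists_isMinOn_ltildeMean {y : Fin n → ℝ} (hy : y ∉ colSpaceXZ X Z) :
    ∃ p ∈ meanParamSpace (LinearMap.range X.mulVecLin) r,
      IsMinOn (ltildeMean Z y) (meanParamSpace (LinearMap.range X.mulVecLin) r) p := by
  obtain ⟨K, hKS, hK, hmem⟩ := exists_isCompact_ltildeMean_sublevel hy (y ⬝ᵥ y)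
  have h0S : ((0 : Fin n → ℝ), (1 : ℝ), (0 : Fin r → ℝ)) ∈
      meanParamSpace (LinearMap.range X.mulVecLin) r :=
    ⟨Submodule.zero_mem _, one_pos, fun _ => le_rfl⟩
  have h0K := hmem _ h0S (fun _ _ => rfl) (ltildeMean_zero_one_zero Z y).le
  refine hK.exists_isMinOn_of_forall_exists_le hKS
    ((continuousOn_ltildeMean Z y).mono fun p hp => ⟨trivial, (hKS hp).2⟩) ⟨_, h0S⟩
    fun p hp => ?_
  by_cases hL : ltildeMean Z y p ≤ y ⬝ᵥ y
  · set p' := (p.1, p.2.1, fun i => if Z i = 0 then 0 else p.2.2 i)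
    have hp' : ltildeMean Z y p' = ltildeMean Z y p := by
      simp only [ltildeMean, p', Vtilde_ite_eq_zero]
    have hp'S : p' ∈ meanParamSpace (LinearMap.range X.mulVecLin) r :=
      ⟨hp.1, hp.2.1, fun i => by simp only [p']; split_ifs; exacts [le_rfl, hp.2.2 i]⟩
    exact ⟨p', hmem p' hp'S (fun i hi => if_pos hi) (hp' ▸ hL), hp'.le⟩
  · exact ⟨_, h0K, (ltildeMean_zero_one_zero Z y).trans_le (not_le.mp hL).le⟩

end

theorem mle_exists_of_not_mem_general
    (n m r : ℕ) (k : Fin r → ℕ)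
    (X : Matrix (Fin n) (Fin m) ℝ)
    (Z : ∀ i : Fin r, Matrix (Fin n) (Fin (k i)) ℝ)
    (y : Fin n → ℝ) (hy : y ∉ colSpaceXZ X Z) :
    ∃ (β : Fin m → ℝ) (κ₀ : ℝ) (κ : Fin r → ℝ), 0 < κ₀ ∧ (∀ i, 0 ≤ κ i) ∧
      ∀ (β' : Fin m → ℝ) (κ₀' : ℝ) (κ' : Fin r → ℝ), 0 < κ₀' → (∀ i, 0 ≤ κ' i) →
        ltilde X Z y β κ₀ κ ≤ ltilde X Z y β' κ₀' κ' := by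
  obtain ⟨⟨μ, κ₀, κ⟩, ⟨⟨β, rfl⟩, hκ₀, hκ⟩, hmin⟩ := exists_isMinOn_ltildeMean hy
  exact ⟨β, κ₀, κ, hκ₀, hκ, fun β' κ₀' κ' hκ₀' hκ' =>
    isMinOn_iff.mp hmin (X *ᵥ β', κ₀', κ') ⟨⟨β', rfl⟩, hκ₀', hκ'⟩⟩

/-- Sufficiency in Theorem 3.1 of Demidenko–Massam: if `y ∉ M(X,Z)`, the ML estimate
exists, i.e. `l̃` attains its infimum on `ℝᵐ × (0,∞) × [0,∞)^r`. -/
theorem mle_exists_of_not_mem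
    (n m r : ℕ) (k : Fin r → ℕ) (hmn : m < n) (hk : ∑ i, k i < n)
    (X : Matrix (Fin n) (Fin m) ℝ) (hX : X.rank = m)
    (Z : ∀ i : Fin r, Matrix (Fin n) (Fin (k i)) ℝ)
    (y : Fin n → ℝ) (hy : y ∉ colSpaceXZ X Z) :
    ∃ (β : Fin m → ℝ) (κ₀ : ℝ) (κ : Fin r → ℝ), 0 < κ₀ ∧ (∀ i, 0 ≤ κ i) ∧
      ∀ (β' : Fin m → ℝ) (κ₀' : ℝ) (κ' : Fin r → ℝ), 0 < κ₀' → (∀ i, 0 ≤ κ' i) →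
        ltilde X Z y β κ₀ κ ≤ ltilde X Z y β' κ₀' κ' :=
  mle_exists_of_not_mem_general n m r k X Z y hy
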